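/- Let (μ_i, σ_i), i ∈ ℕ, and (μ_∞, σ_∞) be media, and suppose the sequence converges weakly* to (μ_∞, σ_∞), meaning: for every continuous ℤ^n-periodic function f : ℝ^n → ℝ and all matrix indices 1 ≤ j,k ≤ n, ∫_{[0,1)^n} f(x) (σ_i(x))_{jk} dμ_i(x) → ∫_{[0,1)^n} f(x) (σ_∞(x))_{jk} dμ_∞(x) as i → ∞. Suppose moreover that (μ_∞, σ_∞) is a submedium of each (μ_i, σ_i), in the sense that for every Borel set A ⊆ ℝ^n and every v ∈ ℝ^n one has ∫_A v·σ_∞(x)v dμ_∞(x) ≤ ∫_A v·σ_i(x)v dμ_i(x). Then for every p ∈ ℝ^n, lim_{i→∞} C_{μ_i,σ_i}(p) = C_{μ_∞,σ_∞}(p) (faithful convergence). -/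

import Mathlib

open MeasureTheory Filter Topology
open scoped RealInnerProductSpace

noncomputable section

/-- `ℝⁿ` with the Euclidean metric. -/
abbrev Rn (n : ℕ) : Type := EuclideanSpace ℝ (Fin n)

/-- The `n`-torus, the `n`-fold product of the additive circle `ℝ/ℤ`. -/
abbrev Tn (n : ℕ) : Type := Fin n → AddCircle (1 : ℝ)

/-- The lattice vector of `ℝⁿ` corresponding to `v ∈ ℤⁿ`. -/
def latVec {n : ℕ} (v : Fin n → ℤ) : Rn n := WithLp.toLp 2 (fun i => (v i : ℝ))

/-- The quotient map `π : ℝⁿ → Tⁿ`. -/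
def torusProj (n : ℕ) : Rn n → Tn n := fun x i => (x i : AddCircle (1 : ℝ))

/-- The half-open unit cube `[0,1)ⁿ`. -/
def unitCube (n : ℕ) : Set (Rn n) := {x | ∀ i, x i ∈ Set.Ico (0 : ℝ) 1}

/-- A test function: smooth and `ℤⁿ`-periodic. -/
def IsTestFun {n : ℕ} (φ : Rn n → ℝ) : Prop :=
  ContDiff ℝ (⊤ : ℕ∞) φ ∧ ∀ (x : Rn n) (v : Fin n → ℤ), φ (x + latVec v) = φ x

/-- The quadratic form `v ⬝ A v` of a matrix `A`. -/
def qf {n : ℕ} (A : Matrix (Fin n) (Fin n) ℝ) (v : Rn n) : ℝ :=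
  ∑ i, ∑ j, v i * A i j * v j

/-- The Dirichlet energy of a test function `φ` with slope `p` in the medium `(μ, σ)`. -/
def energy {n : ℕ} (μ : Measure (Rn n)) (σ : Rn n → Matrix (Fin n) (Fin n) ℝ)
    (φ : Rn n → ℝ) (p : Rn n) : ℝ :=
  ∫ x in unitCube n, qf (σ x) (gradient φ x + p) ∂μ

/-- The effective conductance `C_{μ,σ}(p)` of a medium. -/
def effC {n : ℕ} (μ : Measure (Rn n)) (σ : Rn n → Matrix (Fin n) (Fin n) ℝ)
    (p : Rn n) : ℝ :=
  sInf {c | ∃ φ : Rn n → ℝ, IsTestFun φ ∧ c = energy μ σ φ p}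

/-- A medium in periodic encoding. -/
structure IsMedium {n : ℕ} (μ : Measure (Rn n))
    (σ : Rn n → Matrix (Fin n) (Fin n) ℝ) : Prop where
  invariant : ∀ v : Fin n → ℤ, μ.map (· + latVec v) = μ
  finiteCube : μ (unitCube n) < ⊤
  meas : ∀ i j, Measurable fun x => σ x i j
  periodic : ∀ (x : Rn n) (v : Fin n → ℤ), σ (x + latVec v) = σ x
  symm : ∀ x, (σ x).IsSymm
  posSemidef : ∀ᵐ x ∂μ, (σ x).PosSemidef
  traceOne : ∀ᵐ x ∂μ, (σ x).trace = 1

/-- The support of a Borel measure: the set of points all of whose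
open neighborhoods have positive measure. -/
def msupport {α : Type*} [TopologicalSpace α] [MeasurableSpace α] (μ : Measure α) :
    Set α :=
  {x | ∀ U : Set α, IsOpen U → x ∈ U → 0 < μ U}

/-- The pushforward to the torus of the restriction of `μ` to the unit cube. -/
def torusMeasure {n : ℕ} (μ : Measure (Rn n)) : Measure (Tn n) :=
  (μ.restrict (unitCube n)).map (torusProj n)

/-- The set of homotopy classes of closed loops lying in a periodic set `Γ ⊆ ℝⁿ`. -/
def homotopySet {n : ℕ} (Γ : Set (Rn n)) : Set (Fin n → ℤ) :=
  {v | ∃ γ : ℝ → Rn n, ContinuousOn γ (Set.Icc 0 1) ∧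
    (∀ t ∈ Set.Icc (0 : ℝ) 1, γ t ∈ Γ) ∧ γ 1 = γ 0 + latVec v}

/-- The set of homotopy classes of closed loops lying in a subset `E` of the torus. -/
def homotopySetT {n : ℕ} (E : Set (Tn n)) : Set (Fin n → ℤ) :=
  {v | ∃ γ : ℝ → Rn n, ContinuousOn γ (Set.Icc 0 1) ∧
    (∀ t ∈ Set.Icc (0 : ℝ) 1, torusProj n (γ t) ∈ E) ∧ γ 1 = γ 0 + latVec v}

/-- The Dirichlet energy of a test function on a coercive periodic network `(Γ, a)`. -/
def netEnergy {n : ℕ} (Γ : Set (Rn n)) (a : Rn n → ℝ) (φ : Rn n → ℝ) (p : Rn n) : ℝ :=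
  ∫ x in Γ ∩ unitCube n, ‖gradient φ x + p‖ ^ 2 * a x ∂μH[1]

/-- The effective conductance `C(p)` of a coercive periodic network `(Γ, a)`. -/
def netC {n : ℕ} (Γ : Set (Rn n)) (a : Rn n → ℝ) (p : Rn n) : ℝ :=
  sInf {c | ∃ φ : Rn n → ℝ, IsTestFun φ ∧ c = netEnergy Γ a φ p}

/-- Weak* convergence of media: convergence of all integrals of continuous `ℤⁿ`-periodic
functions against each matrix entry. -/
def WeakStarConv {n : ℕ} (μ : ℕ → Measure (Rn n))
    (σ : ℕ → Rn n → Matrix (Fin n) (Fin n) ℝ)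
    (μl : Measure (Rn n)) (σl : Rn n → Matrix (Fin n) (Fin n) ℝ) : Prop :=
  ∀ f : Rn n → ℝ, Continuous f → (∀ (x : Rn n) (v : Fin n → ℤ), f (x + latVec v) = f x) →
    ∀ j k : Fin n,
      Tendsto (fun i => ∫ x in unitCube n, f x * σ i x j k ∂(μ i)) atTop
        (𝓝 (∫ x in unitCube n, f x * σl x j k ∂μl))

namespace Stmt15

lemma measurableSet_unitCube {n : ℕ} : MeasurableSet (unitCube n) := by
  have : unitCube n = ⋂ i, (fun x : Rn n => x i) ⁻¹' Set.Ico 0 1 := by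
    ext x; simp [unitCube]
  rw [this]
  exact MeasurableSet.iInter fun i =>
    (EuclideanSpace.proj i).continuous.measurable measurableSet_Ico

lemma coord_abs_le_norm {n : ℕ} (w : Rn n) (j : Fin n) : |w j| ≤ ‖w‖ := by
  rw [EuclideanSpace.norm_eq w,
    show |w j| = Real.sqrt (|w j| ^ 2) by rw [Real.sqrt_sq_eq_abs]; simp]
  apply Real.sqrt_le_sqrt
  rw [sq_abs]
  calc w j ^ 2 = ‖w j‖ ^ 2 := by simp [Real.norm_eq_abs, sq_abs]
    _ ≤ ∑ i, ‖w i‖ ^ 2 :=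
      Finset.single_le_sum (f := fun i => ‖w i‖ ^ 2) (fun i _ => by positivity)
        (Finset.mem_univ j)

lemma qf_nonneg {n : ℕ} {A : Matrix (Fin n) (Fin n) ℝ} (hA : A.PosSemidef) (v : Rn n) :
    0 ≤ qf A v := by
  have := hA.dotProduct_mulVec_nonneg (fun i => v i)
  simpa [qf, dotProduct, Matrix.mulVec, Finset.mul_sum, mul_assoc] using this

lemma qf_single_pair {n : ℕ} (A : Matrix (Fin n) (Fin n) ℝ) (j k : Fin n) (a b : ℝ) :
    qf A (WithLp.toLp 2 (Pi.single j a + Pi.single k b : Fin n → ℝ) : Rn n)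
      = (a * A j j * a + a * A j k * b) + (b * A k j * a + b * A k k * b) := by
  simp only [qf, PiLp.toLp_apply, Pi.add_apply, Pi.single_apply, add_mul, mul_add, Finset.sum_add_distrib,
    mul_ite, ite_mul, zero_mul, mul_zero, Finset.sum_ite_eq, Finset.sum_ite_eq',
    Finset.mem_univ, if_true]
  ring

lemma diag_nonneg {n : ℕ} {A : Matrix (Fin n) (Fin n) ℝ} (hA : A.PosSemidef) (j : Fin n) :
    0 ≤ A j j := by
  have h := qf_nonneg hA (WithLp.toLp 2 (Pi.single j 1 + Pi.single j 0 : Fin n → ℝ) : Rn n)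
  rw [qf_single_pair] at h
  linarith

lemma entry_abs_le {n : ℕ} {A : Matrix (Fin n) (Fin n) ℝ} (hA : A.PosSemidef)
    (ht : A.trace = 1) (j k : Fin n) : |A j k| ≤ 1 := by
  have hdiag : ∀ i, 0 ≤ A i i := diag_nonneg hA
  have htr : ∑ i, A i i = 1 := by simpa [Matrix.trace, Matrix.diag] using ht
  have hdle : ∀ i, A i i ≤ 1 := by
    intro i
    rw [← htr]
    exact Finset.single_le_sum (f := fun i => A i i) (fun i _ => hdiag i) (Finset.mem_univ i)
  rcases eq_or_ne j k with rfl | hjk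
  · rw [abs_of_nonneg (hdiag j)]; exact hdle j
  · have hsym : A k j = A j k := by
      have := hA.1.apply j k
      simpa using this
    have h1 := qf_nonneg hA (WithLp.toLp 2 (Pi.single j 1 + Pi.single k 1 : Fin n → ℝ) : Rn n)
    have h2 := qf_nonneg hA (WithLp.toLp 2 (Pi.single j 1 + Pi.single k (-1) : Fin n → ℝ) : Rn n)
    rw [qf_single_pair] at h1 h2
    have h3 : A j j + A k k ≤ 1 := by
      rw [← htr]
      have := Finset.sum_le_sum_of_subset_of_nonneg
        (Finset.subset_univ ({j, k} : Finset (Fin n))) (fun i _ _ => hdiag i)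
      rwa [Finset.sum_pair hjk] at this
    rw [abs_le]
    constructor <;> nlinarith [hsym]

lemma gradient_periodic {n : ℕ} {φ : Rn n → ℝ} (hφ : IsTestFun φ) (x : Rn n)
    (v : Fin n → ℤ) : gradient φ (x + latVec v) = gradient φ x := by
  have hd : HasFDerivAt φ (fderiv ℝ φ (x + latVec v)) (x + latVec v) :=
    (hφ.1.differentiable (by simp) (x + latVec v)).hasFDerivAt
  have h2 : HasFDerivAt (fun y => φ (y + latVec v)) (fderiv ℝ φ (x + latVec v)) x := by
    have := hd.comp x ((hasFDerivAt_id x).add_const (latVec v))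
    simp at this
    exact this
  have h3 : HasFDerivAt φ (fderiv ℝ φ (x + latVec v)) x := by
    simpa [funext fun y => hφ.2 y v] using h2
  simp [gradient, h3.fderiv]

lemma gradient_continuous {n : ℕ} {φ : Rn n → ℝ} (hφ : IsTestFun φ) :
    Continuous (gradient φ) :=
  (InnerProductSpace.toDual ℝ (Rn n)).symm.continuous.comp (hφ.1.continuous_fderiv (by simp))

lemma isCompact_cube {n : ℕ} : IsCompact {x : Rn n | ∀ i, x i ∈ Set.Icc (0:ℝ) 1} := by
  have h0 : IsCompact (Set.univ.pi fun _ : Fin n => Set.Icc (0:ℝ) 1) :=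
    isCompact_univ_pi fun _ => isCompact_Icc
  have : {x : Rn n | ∀ i, x i ∈ Set.Icc (0:ℝ) 1}
      = (EuclideanSpace.equiv (Fin n) ℝ).symm '' (Set.univ.pi fun _ => Set.Icc (0:ℝ) 1) := by
    ext x
    constructor
    · intro hx
      exact ⟨fun i => x i, fun i _ => hx i, rfl⟩
    · rintro ⟨y, hy, rfl⟩ i
      exact hy i (Set.mem_univ i)
  rw [this]
  exact h0.image (EuclideanSpace.equiv (Fin n) ℝ).symm.continuous

lemma bounded_of_periodic {n : ℕ} {E : Type*} [NormedAddCommGroup E] {f : Rn n → E}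
    (hf : Continuous f) (hper : ∀ (x : Rn n) (v : Fin n → ℤ), f (x + latVec v) = f x) :
    ∃ M : ℝ, 0 ≤ M ∧ ∀ x, ‖f x‖ ≤ M := by
  obtain ⟨C, hC⟩ := isCompact_cube.exists_bound_of_continuousOn hf.continuousOn
  refine ⟨max C 0, le_max_right _ _, fun x => ?_⟩
  set v : Fin n → ℤ := fun i => ⌊x i⌋ with hv
  set y : Rn n := WithLp.toLp 2 (fun i => Int.fract (x i)) with hy
  have hxy : x = y + latVec v := by
    ext i
    show x i = Int.fract (x i) + (⌊x i⌋ : ℝ)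
    rw [Int.fract]; ring
  have hyc : y ∈ {z : Rn n | ∀ i, z i ∈ Set.Icc (0:ℝ) 1} := by
    intro i
    exact ⟨Int.fract_nonneg _, (Int.fract_lt_one _).le⟩
  calc ‖f x‖ = ‖f y‖ := by rw [hxy, hper y v]
    _ ≤ C := hC y hyc
    _ ≤ max C 0 := le_max_left _ _

lemma continuous_coord {n : ℕ} (i : Fin n) : Continuous fun v : Rn n => v i :=
  (EuclideanSpace.proj i).continuous

lemma continuous_qf {n : ℕ} (A : Matrix (Fin n) (Fin n) ℝ) :
    Continuous fun v : Rn n => qf A v := by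
  unfold qf
  apply continuous_finset_sum
  intro i _
  apply continuous_finset_sum
  intro j _
  exact ((continuous_coord i).mul continuous_const).mul (continuous_coord j)

lemma measurable_qf {n : ℕ} {σ : Rn n → Matrix (Fin n) (Fin n) ℝ}
    (hσ : ∀ i j, Measurable fun x => σ x i j) {w : Rn n → Rn n} (hw : Measurable w) :
    Measurable fun x => qf (σ x) (w x) := by
  unfold qf
  apply Finset.measurable_sum
  intro i _
  apply Finset.measurable_sum
  intro j _
  exact ((((continuous_coord i).measurable.comp hw).mul (hσ i j)).mul
    ((continuous_coord j).measurable.comp hw))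

lemma abs_qf_le {n : ℕ} {A : Matrix (Fin n) (Fin n) ℝ} (h : ∀ j k, |A j k| ≤ 1)
    (v : Rn n) : |qf A v| ≤ (n : ℝ) ^ 2 * ‖v‖ ^ 2 := by
  unfold qf
  calc |∑ i, ∑ j, v i * A i j * v j| ≤ ∑ i, |∑ j, v i * A i j * v j| :=
        Finset.abs_sum_le_sum_abs _ _
    _ ≤ ∑ i : Fin n, ∑ j : Fin n, |v i * A i j * v j| :=
        Finset.sum_le_sum fun i _ => Finset.abs_sum_le_sum_abs _ _
    _ ≤ ∑ i : Fin n, ∑ j : Fin n, ‖v‖ * ‖v‖ := by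
        apply Finset.sum_le_sum; intro i _
        apply Finset.sum_le_sum; intro j _
        rw [abs_mul, abs_mul]
        calc |v i| * |A i j| * |v j| ≤ |v i| * 1 * |v j| := by
              have h3 := h i j
              have h0 : (0:ℝ) ≤ |v i| := abs_nonneg _
              have h4 : (0:ℝ) ≤ |v j| := abs_nonneg _
              exact mul_le_mul_of_nonneg_right (mul_le_mul_of_nonneg_left h3 h0) h4
          _ = |v i| * |v j| := by ring
          _ ≤ ‖v‖ * ‖v‖ :=
              mul_le_mul (coord_abs_le_norm v i) (coord_abs_le_norm v j)
                (abs_nonneg _) (norm_nonneg _)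
    _ = (n : ℝ) ^ 2 * ‖v‖ ^ 2 := by
        simp [Finset.sum_const]
        ring

lemma entries_ae {n : ℕ} {μ : Measure (Rn n)} {σ : Rn n → Matrix (Fin n) (Fin n) ℝ}
    (med : IsMedium μ σ) : ∀ᵐ x ∂μ, ∀ j k, |σ x j k| ≤ 1 :=
  (med.posSemidef.and med.traceOne).mono fun x hx j k => entry_abs_le hx.1 hx.2 j k

lemma energy_nonneg {n : ℕ} {μ : Measure (Rn n)} {σ : Rn n → Matrix (Fin n) (Fin n) ℝ}
    (med : IsMedium μ σ) (φ : Rn n → ℝ) (p : Rn n) : 0 ≤ energy μ σ φ p :=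
  integral_nonneg_of_ae (ae_restrict_of_ae (med.posSemidef.mono fun _ hx => qf_nonneg hx _))

lemma g_periodic {n : ℕ} {φ : Rn n → ℝ} (hφ : IsTestFun φ) (p : Rn n) (x : Rn n)
    (v : Fin n → ℤ) : gradient φ (x + latVec v) + p = gradient φ x + p := by
  rw [gradient_periodic hφ x v]

lemma energy_eq {n : ℕ} {μ : Measure (Rn n)} {σ : Rn n → Matrix (Fin n) (Fin n) ℝ}
    (med : IsMedium μ σ) {φ : Rn n → ℝ} (hφ : IsTestFun φ) (p : Rn n) :
    energy μ σ φ p = ∑ j, ∑ k, ∫ x in unitCube n,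
      ((gradient φ x + p) j * (gradient φ x + p) k) * σ x j k ∂μ := by
  haveI : Fact (μ (unitCube n) < ⊤) := ⟨med.finiteCube⟩
  have hgc : Continuous fun x => gradient φ x + p :=
    (gradient_continuous hφ).add continuous_const
  obtain ⟨M, hM0, hM⟩ := bounded_of_periodic hgc (g_periodic hφ p)
  have hent := ae_restrict_of_ae (μ := μ) (s := unitCube n) (entries_ae med)
  have hint : ∀ j k : Fin n, Integrable
      (fun x => ((gradient φ x + p) j * (gradient φ x + p) k) * σ x j k)
      (μ.restrict (unitCube n)) := by
    intro j k
    refine Integrable.mono' (integrable_const (M * M)) ?_ ?_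
    · exact ((((continuous_coord j).comp hgc).mul
        ((continuous_coord k).comp hgc)).measurable.mul (med.meas j k)).aestronglyMeasurable
    · filter_upwards [hent] with x hx
      rw [Real.norm_eq_abs, abs_mul, abs_mul]
      have h1 := (coord_abs_le_norm (gradient φ x + p) j).trans (hM x)
      have h2 := (coord_abs_le_norm (gradient φ x + p) k).trans (hM x)
      have h3 := hx j k
      have h4 : |(gradient φ x + p) j| * |(gradient φ x + p) k| ≤ M * M :=
        mul_le_mul h1 h2 (abs_nonneg _) hM0
      calc |(gradient φ x + p) j| * |(gradient φ x + p) k| * |σ x j k|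
          ≤ M * M * 1 := mul_le_mul h4 h3 (abs_nonneg _) (by nlinarith)
        _ = M * M := by ring
  have hpt : ∀ x, qf (σ x) (gradient φ x + p)
      = ∑ j, ∑ k, ((gradient φ x + p) j * (gradient φ x + p) k) * σ x j k := by
    intro x
    unfold qf
    refine Finset.sum_congr rfl fun j _ => Finset.sum_congr rfl fun k _ => by ring
  unfold energy
  simp only [hpt]
  rw [integral_finset_sum _ (fun j _ => integrable_finset_sum _ (fun k _ => hint j k))]
  exact Finset.sum_congr rfl fun j _ => integral_finset_sum _ (fun k _ => hint j k)

lemma energy_tendsto {n : ℕ} {μ : ℕ → Measure (Rn n)}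
    {σ : ℕ → Rn n → Matrix (Fin n) (Fin n) ℝ} {μl : Measure (Rn n)}
    {σl : Rn n → Matrix (Fin n) (Fin n) ℝ}
    (hmed : ∀ i, IsMedium (μ i) (σ i)) (hmedl : IsMedium μl σl)
    (hconv : WeakStarConv μ σ μl σl) {φ : Rn n → ℝ} (hφ : IsTestFun φ) (p : Rn n) :
    Tendsto (fun i => energy (μ i) (σ i) φ p) atTop (𝓝 (energy μl σl φ p)) := by
  have hgc : Continuous fun x => gradient φ x + p :=
    (gradient_continuous hφ).add continuous_const
  have hrw : ∀ i, energy (μ i) (σ i) φ p = ∑ j, ∑ k, ∫ x in unitCube n,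
      ((gradient φ x + p) j * (gradient φ x + p) k) * σ i x j k ∂(μ i) :=
    fun i => energy_eq (hmed i) hφ p
  rw [energy_eq hmedl hφ p]
  simp only [hrw]
  apply tendsto_finset_sum
  intro j _
  apply tendsto_finset_sum
  intro k _
  exact hconv (fun x => (gradient φ x + p) j * (gradient φ x + p) k)
    (((continuous_coord j).comp hgc).mul ((continuous_coord k).comp hgc))
    (fun x v => by simp only [g_periodic hφ p x v]) j k

lemma decomp {n : ℕ} {μ : Measure (Rn n)} {σ : Rn n → Matrix (Fin n) (Fin n) ℝ}
    (med : IsMedium μ σ) (s : SimpleFunc (Rn n) (Rn n)) :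
    ∫ x in unitCube n, qf (σ x) (s x) ∂μ
      = ∑ v ∈ s.range, ∫ x in unitCube n ∩ s ⁻¹' {v}, qf (σ x) v ∂μ := by
  haveI : Fact (μ (unitCube n) < ⊤) := ⟨med.finiteCube⟩
  have hpt : ∀ x, qf (σ x) (s x)
      = ∑ v ∈ s.range, Set.indicator (s ⁻¹' {v}) (fun y => qf (σ y) v) x := by
    intro x
    rw [Finset.sum_eq_single_of_mem (s x) (s.mem_range_self x)]
    · symm
      apply Set.indicator_of_mem
      exact rfl
    · intro v _ hne
      apply Set.indicator_of_notMem
      intro h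
      exact hne (Set.mem_singleton_iff.mp h).symm
  have hintg : ∀ v ∈ s.range, Integrable
      (fun x => Set.indicator (s ⁻¹' {v}) (fun y => qf (σ y) v) x)
      (μ.restrict (unitCube n)) := by
    intro v _
    have hmeas : Measurable fun y => qf (σ y) v :=
      measurable_qf med.meas measurable_const
    refine Integrable.mono' (integrable_const ((n : ℝ) ^ 2 * ‖v‖ ^ 2))
      ((hmeas.indicator (s.measurableSet_fiber v)).aestronglyMeasurable) ?_
    filter_upwards [ae_restrict_of_ae (μ := μ) (s := unitCube n) (entries_ae med)] with x hx
    rw [Real.norm_eq_abs]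
    by_cases hxB : x ∈ s ⁻¹' {v}
    · rw [Set.indicator_of_mem hxB]; exact abs_qf_le hx v
    · rw [Set.indicator_of_notMem hxB]; simp; positivity
  simp only [hpt]
  rw [integral_finset_sum _ hintg]
  exact Finset.sum_congr rfl fun v _ =>
    setIntegral_indicator (s.measurableSet_fiber v)

lemma energy_le {n : ℕ} {μ1 μ2 : Measure (Rn n)}
    {σ1 σ2 : Rn n → Matrix (Fin n) (Fin n) ℝ}
    (h1 : IsMedium μ1 σ1) (h2 : IsMedium μ2 σ2)
    (hsub : ∀ A : Set (Rn n), MeasurableSet A → ∀ v : Rn n,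
      ∫ x in A, qf (σ1 x) v ∂μ1 ≤ ∫ x in A, qf (σ2 x) v ∂μ2)
    {φ : Rn n → ℝ} (hφ : IsTestFun φ) (p : Rn n) :
    energy μ1 σ1 φ p ≤ energy μ2 σ2 φ p := by
  have hgc : Continuous fun x => gradient φ x + p :=
    (gradient_continuous hφ).add continuous_const
  obtain ⟨M, hM0, hM⟩ := bounded_of_periodic hgc (g_periodic hφ p)
  have hgm : Measurable fun x => gradient φ x + p := hgc.measurable
  set gm : ℕ → SimpleFunc (Rn n) (Rn n) :=
    fun m => SimpleFunc.approxOn _ hgm Set.univ 0 (Set.mem_univ 0) m with hgmdef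
  have hbd : ∀ m x, ‖gm m x‖ ≤ M + M := by
    intro m x
    refine le_trans (SimpleFunc.norm_approxOn_zero_le hgm (Set.mem_univ 0) x m) ?_
    have := hM x
    linarith
  have hlim : ∀ x, Tendsto (fun m => gm m x) atTop (𝓝 (gradient φ x + p)) := by
    intro x
    apply SimpleFunc.tendsto_approxOn hgm (Set.mem_univ 0)
    simp
  have hDC : ∀ (ν : Measure (Rn n)) (τ : Rn n → Matrix (Fin n) (Fin n) ℝ),
      IsMedium ν τ →
      Tendsto (fun m => ∫ x in unitCube n, qf (τ x) (gm m x) ∂ν) atTop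
        (𝓝 (energy ν τ φ p)) := by
    intro ν τ med
    haveI : Fact (ν (unitCube n) < ⊤) := ⟨med.finiteCube⟩
    unfold energy
    refine tendsto_integral_of_dominated_convergence
      (fun _ => (n : ℝ) ^ 2 * (M + M) ^ 2) ?_ ?_ ?_ ?_
    · intro m
      exact (measurable_qf med.meas (gm m).measurable).aestronglyMeasurable
    · exact integrable_const _
    · intro m
      filter_upwards [ae_restrict_of_ae (μ := ν) (s := unitCube n) (entries_ae med)] with x hx
      rw [Real.norm_eq_abs]
      refine le_trans (abs_qf_le hx _) ?_
      have h1 := hbd m x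
      gcongr
    · exact Eventually.of_forall fun x =>
        ((continuous_qf (τ x)).tendsto _).comp (hlim x)
  refine le_of_tendsto_of_tendsto' (hDC μ1 σ1 h1) (hDC μ2 σ2 h2) ?_
  intro m
  rw [decomp h1 (gm m), decomp h2 (gm m)]
  apply Finset.sum_le_sum
  intro v _
  exact hsub _ (measurableSet_unitCube.inter ((gm m).measurableSet_fiber v)) v

end Stmt15

open Stmt15

/-- Faithful convergence: if media converge weakly* to a limit medium that
is a submedium of each term of the sequence, then the effective conductances converge to
the effective conductance of the limit. -/
theorem statement15 {n : ℕ} (hn : 1 ≤ n)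
    (μ : ℕ → Measure (Rn n)) (σ : ℕ → Rn n → Matrix (Fin n) (Fin n) ℝ)
    (μl : Measure (Rn n)) (σl : Rn n → Matrix (Fin n) (Fin n) ℝ)
    (hmed : ∀ i, IsMedium (μ i) (σ i)) (hmedl : IsMedium μl σl)
    (hconv : WeakStarConv μ σ μl σl)
    (hsub : ∀ A : Set (Rn n), MeasurableSet A → ∀ (v : Rn n) (i : ℕ),
      ∫ x in A, qf (σl x) v ∂μl ≤ ∫ x in A, qf (σ i x) v ∂(μ i)) :
    ∀ p : Rn n, Tendsto (fun i => effC (μ i) (σ i) p) atTop (𝓝 (effC μl σl p)) := by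
  intro p
  have hzero : IsTestFun (fun _ : Rn n => (0 : ℝ)) := ⟨contDiff_const, fun _ _ => rfl⟩
  have hSlne : {c | ∃ φ : Rn n → ℝ, IsTestFun φ ∧ c = energy μl σl φ p}.Nonempty :=
    ⟨_, ⟨_, hzero, rfl⟩⟩
  have hSine : ∀ i, {c | ∃ φ : Rn n → ℝ, IsTestFun φ ∧ c = energy (μ i) (σ i) φ p}.Nonempty :=
    fun i => ⟨_, ⟨_, hzero, rfl⟩⟩
  have hbddl : BddBelow {c | ∃ φ : Rn n → ℝ, IsTestFun φ ∧ c = energy μl σl φ p} := by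
    refine ⟨0, ?_⟩
    rintro c ⟨φ, hφ, rfl⟩
    exact energy_nonneg hmedl φ p
  have hbddi : ∀ i, BddBelow {c | ∃ φ : Rn n → ℝ, IsTestFun φ ∧ c = energy (μ i) (σ i) φ p} := by
    intro i
    refine ⟨0, ?_⟩
    rintro c ⟨φ, hφ, rfl⟩
    exact energy_nonneg (hmed i) φ p
  have hle : ∀ i, effC μl σl p ≤ effC (μ i) (σ i) p := by
    intro i
    refine le_csInf (hSine i) ?_
    rintro c ⟨φ, hφ, rfl⟩
    exact le_trans (csInf_le hbddl ⟨φ, hφ, rfl⟩)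
      (energy_le hmedl (hmed i) (fun A hA v => hsub A hA v i) hφ p)
  rw [Metric.tendsto_atTop]
  intro ε hε
  obtain ⟨c, hcmem, hc⟩ := Real.lt_sInf_add_pos hSlne hε
  obtain ⟨φ, hφ, rfl⟩ := hcmem
  have hc' : energy μl σl φ p < effC μl σl p + ε := hc
  have hev : ∀ᶠ i in atTop, energy (μ i) (σ i) φ p < effC μl σl p + ε :=
    (energy_tendsto hmed hmedl hconv hφ p).eventually_lt_const hc'
  obtain ⟨N, hN⟩ := eventually_atTop.mp hev
  refine ⟨N, fun i hi => ?_⟩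
  have h1 : effC (μ i) (σ i) p ≤ energy (μ i) (σ i) φ p := csInf_le (hbddi i) ⟨φ, hφ, rfl⟩
  have h2 := hle i
  have h3 := hN i hi
  rw [Real.dist_eq, abs_lt]
  constructor <;> linarith
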